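/- Let G and H be simple graphs of orders n₁ and n₂ with minimum degrees δ(G) ≥ 2 and δ(H) ≥ 2. Then the global clustering coefficient of G × H is Cc(G × H) = (1/(n₁n₂)) · Σ_{u ∈ V(G)} Σ_{v ∈ V(H)} f(u,v) · Cc_u(G) · Cc_v(H), where f(u,v) = (deg_G(u) − 1)(deg_H(v) − 1)/(deg_G(u)·deg_H(v) − 1). -/

import Mathlib

variable {α β : Type*}

/-- Tensor (categorical) product of simple graphs. -/
def tensorProdG (G : SimpleGraph α) (H : SimpleGraph β) : SimpleGraph (α × β) where
  Adj x y := G.Adj x.1 y.1 ∧ H.Adj x.2 y.2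
  symm := ⟨fun _ _ h => ⟨h.1.symm, h.2.symm⟩⟩
  loopless := ⟨fun x h => G.loopless.irrefl x.1 h.1⟩

instance (G : SimpleGraph α) (H : SimpleGraph β) [DecidableRel G.Adj] [DecidableRel H.Adj] :
    DecidableRel (tensorProdG G H).Adj := fun _ _ => instDecidableAnd

/-- Number of triangles incident to `u`: edges of the induced neighborhood. -/
noncomputable def triCount (G : SimpleGraph α) [Fintype α] (u : α) : ℕ :=
  Nat.card (SimpleGraph.induce (G.neighborSet u) G).edgeSet

/-- Local clustering coefficient. -/
noncomputable def locCc (G : SimpleGraph α) [Fintype α] [DecidableRel G.Adj] (u : α) : ℝ :=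
  if 2 ≤ G.degree u then (triCount G u : ℝ) / ((G.degree u).choose 2) else 0

/-- Global clustering coefficient. -/
noncomputable def globCc (G : SimpleGraph α) [Fintype α] [DecidableRel G.Adj] : ℝ :=
  (∑ v, locCc G v) / (Fintype.card α)

/-- Minimum degree of the induced neighborhood of `u`. -/
noncomputable def nbrMinDeg (G : SimpleGraph α) [Fintype α] [DecidableRel G.Adj] (u : α) : ℕ :=
  (SimpleGraph.induce (G.neighborSet u) G).minDegree

/-- Average degree, as a real number. -/
noncomputable def avgDeg (G : SimpleGraph α) [Fintype α] [DecidableRel G.Adj] : ℝ :=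
  (∑ v, (G.degree v : ℝ)) / (Fintype.card α)

/-! The neighbourhood of `(u, v)` in `G × H` is the product of the neighbourhoods of `u` and `v`,
and the subgraph it induces is the tensor product of the two induced neighbourhoods. Hence
`deg (u, v) = deg u · deg v`, and since every pair of an edge of `G` and an edge of `H` spans two
edges of the product, `t (u, v) = 2 t u · t v`. The formula then holds termwise:
`Cc_(u,v) = f(u, v) · Cc_u · Cc_v` is an identity of rational functions in the degrees. -/

open SimpleGraph

lemma natCard_dart_eq_two_mul {V : Type*} [Finite V] (G : SimpleGraph V) :
    Nat.card G.Dart = 2 * Nat.card G.edgeSet := by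
  classical
  have := Fintype.ofFinite V
  rw [Nat.card_eq_fintype_card, Nat.card_eq_fintype_card, dart_card_eq_twice_card_edges,
    edgeFinset, Set.toFinset_card]

def tensorProdGDartEquiv (G : SimpleGraph α) (H : SimpleGraph β) :
    (tensorProdG G H).Dart ≃ G.Dart × H.Dart where
  toFun d := (⟨(d.fst.1, d.snd.1), d.adj.1⟩, ⟨(d.fst.2, d.snd.2), d.adj.2⟩)
  invFun p := ⟨((p.1.fst, p.2.fst), (p.1.snd, p.2.snd)), ⟨p.1.adj, p.2.adj⟩⟩
  left_inv _ := rfl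
  right_inv _ := rfl

/-- An edge `{x, y}` of `G` and an edge `{x', y'}` of `H` give the two edges `{(x, x'), (y, y')}`
and `{(x, y'), (y, x')}` of the tensor product. -/
lemma natCard_edgeSet_tensorProdG [Finite α] [Finite β] (G : SimpleGraph α)
    (H : SimpleGraph β) :
    Nat.card (tensorProdG G H).edgeSet = 2 * (Nat.card G.edgeSet * Nat.card H.edgeSet) := by
  have hdart := natCard_dart_eq_two_mul (tensorProdG G H)
  rw [Nat.card_congr (tensorProdGDartEquiv G H), Nat.card_prod, natCard_dart_eq_two_mul,
    natCard_dart_eq_two_mul] at hdart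
  linarith

def tensorProdGNeighborSetEquiv (G : SimpleGraph α) (H : SimpleGraph β) (u : α) (v : β) :
    (tensorProdG G H).neighborSet (u, v) ≃ G.neighborSet u × H.neighborSet v where
  toFun x := (⟨x.1.1, x.2.1⟩, ⟨x.1.2, x.2.2⟩)
  invFun p := ⟨(p.1.1, p.2.1), p.1.2, p.2.2⟩
  left_inv _ := rfl
  right_inv _ := rfl

def induceNeighborSetTensorProdGIso (G : SimpleGraph α) (H : SimpleGraph β) (u : α) (v : β) :
    (tensorProdG G H).induce ((tensorProdG G H).neighborSet (u, v)) ≃g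
      tensorProdG (G.induce (G.neighborSet u)) (H.induce (H.neighborSet v)) :=
  ⟨tensorProdGNeighborSetEquiv G H u v, Iff.rfl⟩

section

variable [Fintype α] [Fintype β] (G : SimpleGraph α) (H : SimpleGraph β)

lemma degree_tensorProdG [DecidableRel G.Adj] [DecidableRel H.Adj] (u : α) (v : β) :
    (tensorProdG G H).degree (u, v) = G.degree u * H.degree v := by
  simp only [← card_neighborSet_eq_degree, ← Nat.card_eq_fintype_card,
    Nat.card_congr (tensorProdGNeighborSetEquiv G H u v), Nat.card_prod]

lemma triCount_tensorProdG (u : α) (v : β) :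
    triCount (tensorProdG G H) (u, v) = 2 * (triCount G u * triCount H v) := by
  rw [triCount, Nat.card_congr (induceNeighborSetTensorProdGIso G H u v).mapEdgeSet,
    natCard_edgeSet_tensorProdG, triCount, triCount]

lemma locCc_tensorProdG [DecidableRel G.Adj] [DecidableRel H.Adj] {u : α} {v : β}
    (hu : 2 ≤ G.degree u) (hv : 2 ≤ H.degree v) :
    locCc (tensorProdG G H) (u, v) =
      ((G.degree u : ℝ) - 1) * ((H.degree v : ℝ) - 1) / ((G.degree u : ℝ) * (H.degree v : ℝ) - 1) *
        locCc G u * locCc H v := by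
  have huv : 2 ≤ G.degree u * H.degree v := by nlinarith
  rw [locCc, locCc, locCc, degree_tensorProdG, if_pos huv, if_pos hu, if_pos hv,
    triCount_tensorProdG, Nat.cast_choose_two, Nat.cast_choose_two, Nat.cast_choose_two]
  have ha : (2 : ℝ) ≤ G.degree u := by exact_mod_cast hu
  have hb : (2 : ℝ) ≤ H.degree v := by exact_mod_cast hv
  have hab : (G.degree u : ℝ) * H.degree v - 1 ≠ 0 := by nlinarith
  have ha' : (G.degree u : ℝ) - 1 ≠ 0 := by linarith
  have hb' : (H.degree v : ℝ) - 1 ≠ 0 := by linarith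
  push_cast
  field_simp

end

variable [Fintype α] [Fintype β] (G : SimpleGraph α) (H : SimpleGraph β)
  [DecidableRel G.Adj] [DecidableRel H.Adj]

theorem tensor_globCc (hG : ∀ u : α, 2 ≤ G.degree u) (hH : ∀ v : β, 2 ≤ H.degree v) :
    globCc (tensorProdG G H) =
      (1 / ((Fintype.card α : ℝ) * (Fintype.card β : ℝ))) *
        ∑ u : α, ∑ v : β,
          (((G.degree u : ℝ) - 1) * ((H.degree v : ℝ) - 1) / ((G.degree u : ℝ) * (H.degree v : ℝ) - 1)) * locCc G u * locCc H v := by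
  rw [globCc, Fintype.card_prod, Fintype.sum_prod_type, Nat.cast_mul, div_eq_inv_mul, one_div]
  congr 1
  exact Finset.sum_congr rfl fun u _ => Finset.sum_congr rfl fun v _ =>
    locCc_tensorProdG G H (hG u) (hH v)
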